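/- Let Ω_pool = (n_y+n_z-2)^{-1}[(n_y-1) diag-embed(Ω_Y) + (n_z-1) Ω_Z] where Ω_Y is a (D-Q-1)×(D-Q-1) symmetric positive semidefinite matrix embedded in the top-left block of a (D-1)×(D-1) matrix with zeros elsewhere, and Ω_Z is (D-1)×(D-1) symmetric positive semidefinite. Suppose there exist orthogonal matrices R_1 ∈ R^{K×K} and R_2 ∈ R^{(D-K-1)×(D-K-1)} such that, writing U and V for orthogonal matrices of eigenvectors of Ω_Y (canonically embedded) and Ω_Z respectively with eigenvalues in decreasing order, the first K embedded eigenvectors of Ω_Y equal (v_1,...,v_K)R_1 and the remaining embedded eigenvectors equal (v_{K+1},...,v_{D-1})R_2. Then the sum of the K largest eigenvalues of Ω_pool equals (n_y-1)/(n_y+n_z-2) Σ_{i=1}^K α_i + (n_z-1)/(n_y+n_z-2) Σ_{i=1}^K β_i, where α_i and β_i are the decreasing eigenvalues of Ω_Y and Ω_Z. -/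

import Mathlib

open Matrix

/-- Embed a `(D-Q-1)×(D-Q-1)` matrix into the top-left block of a
`(D-1)×(D-1)` matrix, with zeros elsewhere. -/
def diagEmb (D Q : ℕ) (M : Matrix (Fin (D - Q - 1)) (Fin (D - Q - 1)) ℝ) :
    Matrix (Fin (D - 1)) (Fin (D - 1)) ℝ :=
  fun i j =>
    if hi : i.val < D - Q - 1 then
      if hj : j.val < D - Q - 1 then M ⟨i.val, hi⟩ ⟨j.val, hj⟩ else 0
    else 0

/-- Canonical embedding `U ↦ [[U, 0], [0, I_Q]]` of an orthogonal matrix of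
size `D-Q-1` into size `D-1`. -/
def embMat (D Q : ℕ) (U : Matrix (Fin (D - Q - 1)) (Fin (D - Q - 1)) ℝ) :
    Matrix (Fin (D - 1)) (Fin (D - 1)) ℝ :=
  fun i j =>
    if hi : i.val < D - Q - 1 then
      if hj : j.val < D - Q - 1 then U ⟨i.val, hi⟩ ⟨j.val, hj⟩ else 0
    else if j.val < D - Q - 1 then 0
    else if i.val = j.val then 1 else 0

/-- Block-diagonal rotation `[[R₁, 0], [0, R₂]]` with `R₁` of size `K` and
`R₂` of size `D-1-K`. -/
def blockRot (D K : ℕ) (R1 : Matrix (Fin K) (Fin K) ℝ)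
    (R2 : Matrix (Fin (D - 1 - K)) (Fin (D - 1 - K)) ℝ) :
    Matrix (Fin (D - 1)) (Fin (D - 1)) ℝ :=
  fun i j =>
    if hi : i.val < K then
      if hj : j.val < K then R1 ⟨i.val, hi⟩ ⟨j.val, hj⟩ else 0
    else if hj : j.val < K then 0
    else
      R2 ⟨i.val - K, by have := i.isLt; omega⟩ ⟨j.val - K, by have := j.isLt; omega⟩



lemma sum_split {n K : ℕ} (hK : K ≤ n) (f : Fin n → ℝ) :
    ∑ k, f k = (∑ j : Fin K, f ⟨j.1, by have := j.isLt; omega⟩)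
      + ∑ j : Fin (n - K), f ⟨K + j.1, by have := j.isLt; omega⟩ := by
  classical
  set g : ℕ → ℝ := fun i => if h : i < n then f ⟨i, h⟩ else 0 with hg
  have h1 : ∑ k : Fin n, f k = ∑ i ∈ Finset.range n, g i := by
    rw [← Fin.sum_univ_eq_sum_range]
    exact Finset.sum_congr rfl fun k _ => by simp [hg, k.isLt]
  have h2 : ∑ i ∈ Finset.range n, g i
      = ∑ i ∈ Finset.range K, g i + ∑ i ∈ Finset.Ico K n, g i := by
    rw [Finset.range_eq_Ico, ← Finset.sum_Ico_consecutive g (Nat.zero_le K) hK, Finset.range_eq_Ico]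
  have h3 : ∑ i ∈ Finset.Ico K n, g i = ∑ i ∈ Finset.range (n - K), g (K + i) :=
    Finset.sum_Ico_eq_sum_range g K n
  have h4 : ∑ i ∈ Finset.range K, g i = ∑ j : Fin K, f ⟨j.1, by have := j.isLt; omega⟩ := by
    rw [← Fin.sum_univ_eq_sum_range]
    exact Finset.sum_congr rfl fun k _ => by
      have : (k : ℕ) < n := by have := k.isLt; omega
      simp [hg, this]
  have h5 : ∑ i ∈ Finset.range (n - K), g (K + i)
      = ∑ j : Fin (n - K), f ⟨K + j.1, by have := j.isLt; omega⟩ := by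
    rw [← Fin.sum_univ_eq_sum_range (fun i => g (K + i))]
    exact Finset.sum_congr rfl fun k _ => by
      have : K + (k : ℕ) < n := by have := k.isLt; omega
      simp [hg, this]
  rw [h1, h2, h3, h4, h5]

lemma filter_sum {n K : ℕ} (hK : K ≤ n) (f : Fin n → ℝ) :
    ∑ i ∈ Finset.univ.filter (fun i : Fin n => i.1 < K), f i
      = ∑ j : Fin K, f ⟨j.1, by have := j.isLt; omega⟩ := by
  rw [Finset.sum_filter, sum_split hK (fun i => if i.1 < K then f i else 0)]
  have h2 : ∀ j : Fin (n - K),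
      (if ((⟨K + j.1, by have := j.isLt; omega⟩ : Fin n)).1 < K
        then f ⟨K + j.1, by have := j.isLt; omega⟩ else 0) = 0 := by
    intro j; rw [if_neg]; simp
  rw [Finset.sum_congr rfl fun j _ => h2 j]
  simp

section BlockRot
variable {D K : ℕ}

lemma blockRot_apply_11 (A : Matrix (Fin K) (Fin K) ℝ)
    (B : Matrix (Fin (D - 1 - K)) (Fin (D - 1 - K)) ℝ) (i j : Fin (D - 1))
    (hi : i.1 < K) (hj : j.1 < K) :
    blockRot D K A B i j = A ⟨i.1, hi⟩ ⟨j.1, hj⟩ := by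
  simp [blockRot, hi, hj]

lemma blockRot_apply_12 (A : Matrix (Fin K) (Fin K) ℝ)
    (B : Matrix (Fin (D - 1 - K)) (Fin (D - 1 - K)) ℝ) (i j : Fin (D - 1))
    (hi : i.1 < K) (hj : ¬ j.1 < K) :
    blockRot D K A B i j = 0 := by
  simp [blockRot, hi, hj]

lemma blockRot_apply_21 (A : Matrix (Fin K) (Fin K) ℝ)
    (B : Matrix (Fin (D - 1 - K)) (Fin (D - 1 - K)) ℝ) (i j : Fin (D - 1))
    (hi : ¬ i.1 < K) (hj : j.1 < K) :
    blockRot D K A B i j = 0 := by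
  simp [blockRot, hi, hj]

lemma blockRot_apply_22 (A : Matrix (Fin K) (Fin K) ℝ)
    (B : Matrix (Fin (D - 1 - K)) (Fin (D - 1 - K)) ℝ) (i j : Fin (D - 1))
    (hi : ¬ i.1 < K) (hj : ¬ j.1 < K) :
    blockRot D K A B i j
      = B ⟨i.1 - K, by have := i.isLt; omega⟩ ⟨j.1 - K, by have := j.isLt; omega⟩ := by
  simp [blockRot, hi, hj]

lemma blockRot_transpose (A : Matrix (Fin K) (Fin K) ℝ)
    (B : Matrix (Fin (D - 1 - K)) (Fin (D - 1 - K)) ℝ) :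
    (blockRot D K A B)ᵀ = blockRot D K Aᵀ Bᵀ := by
  ext i j
  by_cases hi : i.1 < K <;> by_cases hj : j.1 < K <;>
    simp [blockRot, transpose_apply, hi, hj]

lemma blockRot_add (A A' : Matrix (Fin K) (Fin K) ℝ)
    (B B' : Matrix (Fin (D - 1 - K)) (Fin (D - 1 - K)) ℝ) :
    blockRot D K A B + blockRot D K A' B' = blockRot D K (A + A') (B + B') := by
  ext i j
  by_cases hi : i.1 < K <;> by_cases hj : j.1 < K <;>
    simp [blockRot, hi, hj]

lemma blockRot_smul (c : ℝ) (A : Matrix (Fin K) (Fin K) ℝ)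
    (B : Matrix (Fin (D - 1 - K)) (Fin (D - 1 - K)) ℝ) :
    c • blockRot D K A B = blockRot D K (c • A) (c • B) := by
  ext i j
  by_cases hi : i.1 < K <;> by_cases hj : j.1 < K <;>
    simp [blockRot, hi, hj]

lemma blockRot_one : blockRot D K (1 : Matrix (Fin K) (Fin K) ℝ)
    (1 : Matrix (Fin (D - 1 - K)) (Fin (D - 1 - K)) ℝ) = 1 := by
  ext i j
  rw [Matrix.one_apply]
  by_cases hi : i.1 < K <;> by_cases hj : j.1 < K
  · rw [blockRot_apply_11 _ _ _ _ hi hj, Matrix.one_apply]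
    by_cases h : i = j
    · rw [if_pos (by simp [h]), if_pos h]
    · rw [if_neg (by simp [Fin.ext_iff] at h ⊢; omega), if_neg h]
  · rw [blockRot_apply_12 _ _ _ _ hi hj, if_neg (by intro h; subst h; exact hj hi)]
  · rw [blockRot_apply_21 _ _ _ _ hi hj, if_neg (by intro h; subst h; exact hi hj)]
  · rw [blockRot_apply_22 _ _ _ _ hi hj, Matrix.one_apply]
    by_cases h : i = j
    · rw [if_pos (by subst h; rfl), if_pos h]
    · rw [if_neg (by simp [Fin.ext_iff] at h ⊢; omega), if_neg h]

lemma blockRot_apply_2r (A : Matrix (Fin K) (Fin K) ℝ)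
    (B : Matrix (Fin (D - 1 - K)) (Fin (D - 1 - K)) ℝ) (i : Fin (D - 1))
    (hi : ¬ i.1 < K) (t : Fin (D - 1 - K)) (h : K + t.1 < D - 1) :
    blockRot D K A B i ⟨K + t.1, h⟩ = B ⟨i.1 - K, by have := i.isLt; omega⟩ t := by
  rw [blockRot_apply_22 A B i ⟨K + t.1, h⟩ hi (by simp)]
  congr 1
  exact Fin.ext (by simp)

lemma blockRot_apply_r2 (A : Matrix (Fin K) (Fin K) ℝ)
    (B : Matrix (Fin (D - 1 - K)) (Fin (D - 1 - K)) ℝ) (j : Fin (D - 1))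
    (hj : ¬ j.1 < K) (t : Fin (D - 1 - K)) (h : K + t.1 < D - 1) :
    blockRot D K A B ⟨K + t.1, h⟩ j = B t ⟨j.1 - K, by have := j.isLt; omega⟩ := by
  rw [blockRot_apply_22 A B ⟨K + t.1, h⟩ j (by simp) hj]
  congr 1
  exact Fin.ext (by simp)

lemma blockRot_mul (hK : K ≤ D - 1) (A A' : Matrix (Fin K) (Fin K) ℝ)
    (B B' : Matrix (Fin (D - 1 - K)) (Fin (D - 1 - K)) ℝ) :
    blockRot D K A B * blockRot D K A' B' = blockRot D K (A * A') (B * B') := by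
  ext i j
  rw [mul_apply, sum_split hK]
  by_cases hi : i.1 < K <;> by_cases hj : j.1 < K
  · rw [blockRot_apply_11 _ _ _ _ hi hj, mul_apply]
    have e1 : ∀ t : Fin K,
        blockRot D K A B i ⟨t.1, by have := t.isLt; omega⟩
          * blockRot D K A' B' ⟨t.1, by have := t.isLt; omega⟩ j
        = A ⟨i.1, hi⟩ t * A' t ⟨j.1, hj⟩ := by
      intro t
      rw [blockRot_apply_11 _ _ _ _ hi t.isLt, blockRot_apply_11 _ _ _ _ t.isLt hj]
    have e2 : ∀ t : Fin (D - 1 - K),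
        blockRot D K A B i ⟨K + t.1, by have := t.isLt; omega⟩
          * blockRot D K A' B' ⟨K + t.1, by have := t.isLt; omega⟩ j = 0 := by
      intro t
      rw [blockRot_apply_12 _ _ _ _ hi (by simp), zero_mul]
    rw [Finset.sum_congr rfl fun t _ => e1 t, Finset.sum_congr rfl fun t _ => e2 t]
    simp
  · rw [blockRot_apply_12 _ _ _ _ hi hj]
    have e1 : ∀ t : Fin K,
        blockRot D K A B i ⟨t.1, by have := t.isLt; omega⟩
          * blockRot D K A' B' ⟨t.1, by have := t.isLt; omega⟩ j = 0 := by
      intro t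
      rw [blockRot_apply_12 _ _ _ _ t.isLt hj, mul_zero]
    have e2 : ∀ t : Fin (D - 1 - K),
        blockRot D K A B i ⟨K + t.1, by have := t.isLt; omega⟩
          * blockRot D K A' B' ⟨K + t.1, by have := t.isLt; omega⟩ j = 0 := by
      intro t
      rw [blockRot_apply_12 _ _ _ _ hi (by simp), zero_mul]
    rw [Finset.sum_congr rfl fun t _ => e1 t, Finset.sum_congr rfl fun t _ => e2 t]
    simp
  · rw [blockRot_apply_21 _ _ _ _ hi hj]
    have e1 : ∀ t : Fin K,
        blockRot D K A B i ⟨t.1, by have := t.isLt; omega⟩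
          * blockRot D K A' B' ⟨t.1, by have := t.isLt; omega⟩ j = 0 := by
      intro t
      rw [blockRot_apply_21 _ _ _ _ hi t.isLt, zero_mul]
    have e2 : ∀ t : Fin (D - 1 - K),
        blockRot D K A B i ⟨K + t.1, by have := t.isLt; omega⟩
          * blockRot D K A' B' ⟨K + t.1, by have := t.isLt; omega⟩ j = 0 := by
      intro t
      rw [blockRot_apply_21 _ _ _ _ (by simp) hj, mul_zero]
    rw [Finset.sum_congr rfl fun t _ => e1 t, Finset.sum_congr rfl fun t _ => e2 t]
    simp
  · rw [blockRot_apply_22 _ _ _ _ hi hj, mul_apply]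
    have e1 : ∀ t : Fin K,
        blockRot D K A B i ⟨t.1, by have := t.isLt; omega⟩
          * blockRot D K A' B' ⟨t.1, by have := t.isLt; omega⟩ j = 0 := by
      intro t
      rw [blockRot_apply_21 _ _ _ _ hi t.isLt, zero_mul]
    have e2 : ∀ t : Fin (D - 1 - K),
        blockRot D K A B i ⟨K + t.1, by have := t.isLt; omega⟩
          * blockRot D K A' B' ⟨K + t.1, by have := t.isLt; omega⟩ j
        = B ⟨i.1 - K, by have := i.isLt; omega⟩ t
          * B' t ⟨j.1 - K, by have := j.isLt; omega⟩ := by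
      intro t
      rw [blockRot_apply_2r _ _ _ hi, blockRot_apply_r2 _ _ _ hj]
    rw [Finset.sum_congr rfl fun t _ => e1 t, Finset.sum_congr rfl fun t _ => e2 t]
    simp

lemma blockRot_diagonal (hK : K ≤ D - 1) (a : Fin (D - 1) → ℝ) :
    diagonal a = blockRot D K (diagonal fun t : Fin K => a ⟨t.1, by have := t.isLt; omega⟩)
      (diagonal fun t : Fin (D - 1 - K) => a ⟨K + t.1, by have := t.isLt; omega⟩) := by
  ext i j
  by_cases hi : i.1 < K <;> by_cases hj : j.1 < K
  · rw [blockRot_apply_11 _ _ _ _ hi hj]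
    by_cases h : i = j
    · subst h
      rw [diagonal_apply_eq, diagonal_apply_eq]
    · rw [diagonal_apply_ne _ h, diagonal_apply_ne _ (by simp [Fin.ext_iff] at h ⊢; omega)]
  · rw [blockRot_apply_12 _ _ _ _ hi hj,
      diagonal_apply_ne _ (by intro e; subst e; exact hj hi)]
  · rw [blockRot_apply_21 _ _ _ _ hi hj,
      diagonal_apply_ne _ (by intro e; subst e; exact hi hj)]
  · rw [blockRot_apply_22 _ _ _ _ hi hj]
    by_cases h : i = j
    · subst h
      rw [diagonal_apply_eq, diagonal_apply_eq]
      congr 1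
      exact Fin.ext (by simp; omega)
    · rw [diagonal_apply_ne _ h, diagonal_apply_ne _ (by simp [Fin.ext_iff] at h ⊢; omega)]

end BlockRot

lemma diagEmb_spec {D Q : ℕ} (hm : D - Q - 1 ≤ D - 1)
    (U : Matrix (Fin (D - Q - 1)) (Fin (D - Q - 1)) ℝ) (α : Fin (D - Q - 1) → ℝ) :
    embMat D Q U * diagonal (fun k : Fin (D - 1) =>
        if h : k.1 < D - Q - 1 then α ⟨k.1, h⟩ else 0) * (embMat D Q U)ᵀ
      = diagEmb D Q (U * diagonal α * Uᵀ) := by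
  set α' : Fin (D - 1) → ℝ := fun k =>
    if h : k.1 < D - Q - 1 then α ⟨k.1, h⟩ else 0 with hα'
  ext i j
  have lhs_eq : (embMat D Q U * diagonal α' * (embMat D Q U)ᵀ) i j
      = ∑ k : Fin (D - 1), embMat D Q U i k * α' k * embMat D Q U j k := by
    rw [mul_apply]
    exact Finset.sum_congr rfl fun k _ => by rw [mul_diagonal, transpose_apply]
  rw [lhs_eq, sum_split hm]
  have tail0 : ∀ t : Fin (D - 1 - (D - Q - 1)),
      embMat D Q U i ⟨(D - Q - 1) + t.1, by have := t.isLt; omega⟩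
        * α' ⟨(D - Q - 1) + t.1, by have := t.isLt; omega⟩
        * embMat D Q U j ⟨(D - Q - 1) + t.1, by have := t.isLt; omega⟩ = 0 := by
    intro t
    have : α' ⟨(D - Q - 1) + t.1, by have := t.isLt; omega⟩ = 0 := by
      simp only [hα']
      rw [dif_neg (by simp)]
    rw [this, mul_zero, zero_mul]
  rw [Finset.sum_congr rfl fun t _ => tail0 t, Finset.sum_const_zero, add_zero]
  by_cases hi : i.1 < D - Q - 1 <;> by_cases hj : j.1 < D - Q - 1
  · have head : ∀ t : Fin (D - Q - 1),
        embMat D Q U i ⟨t.1, by have := t.isLt; omega⟩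
          * α' ⟨t.1, by have := t.isLt; omega⟩
          * embMat D Q U j ⟨t.1, by have := t.isLt; omega⟩
        = U ⟨i.1, hi⟩ t * α t * U ⟨j.1, hj⟩ t := by
      intro t
      have e1 : embMat D Q U i ⟨t.1, by have := t.isLt; omega⟩ = U ⟨i.1, hi⟩ t := by
        simp [embMat, hi, t.isLt]
      have e2 : embMat D Q U j ⟨t.1, by have := t.isLt; omega⟩ = U ⟨j.1, hj⟩ t := by
        simp [embMat, hj, t.isLt]
      have e3 : α' ⟨t.1, by have := t.isLt; omega⟩ = α t := by
        simp only [hα']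
        rw [dif_pos (show ((⟨t.1, by have := t.isLt; omega⟩ : Fin (D - 1))).1 < D - Q - 1 from t.isLt)]
      rw [e1, e2, e3]
    rw [Finset.sum_congr rfl fun t _ => head t]
    have : diagEmb D Q (U * diagonal α * Uᵀ) i j = (U * diagonal α * Uᵀ) ⟨i.1, hi⟩ ⟨j.1, hj⟩ := by
      simp [diagEmb, hi, hj]
    rw [this, mul_apply]
    exact Finset.sum_congr rfl fun k _ => by rw [mul_diagonal, transpose_apply]
  · have head : ∀ t : Fin (D - Q - 1),
        embMat D Q U i ⟨t.1, by have := t.isLt; omega⟩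
          * α' ⟨t.1, by have := t.isLt; omega⟩
          * embMat D Q U j ⟨t.1, by have := t.isLt; omega⟩ = 0 := by
      intro t
      have e2 : embMat D Q U j ⟨t.1, by have := t.isLt; omega⟩ = 0 := by
        simp [embMat, hj, t.isLt]
      rw [e2, mul_zero]
    rw [Finset.sum_congr rfl fun t _ => head t]
    simp [diagEmb, hi, hj]
  · have head : ∀ t : Fin (D - Q - 1),
        embMat D Q U i ⟨t.1, by have := t.isLt; omega⟩
          * α' ⟨t.1, by have := t.isLt; omega⟩
          * embMat D Q U j ⟨t.1, by have := t.isLt; omega⟩ = 0 := by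
      intro t
      have e1 : embMat D Q U i ⟨t.1, by have := t.isLt; omega⟩ = 0 := by
        simp [embMat, hi, t.isLt]
      rw [e1, zero_mul, zero_mul]
    rw [Finset.sum_congr rfl fun t _ => head t]
    simp [diagEmb, hi]
  · have head : ∀ t : Fin (D - Q - 1),
        embMat D Q U i ⟨t.1, by have := t.isLt; omega⟩
          * α' ⟨t.1, by have := t.isLt; omega⟩
          * embMat D Q U j ⟨t.1, by have := t.isLt; omega⟩ = 0 := by
      intro t
      have e1 : embMat D Q U i ⟨t.1, by have := t.isLt; omega⟩ = 0 := by
        simp [embMat, hi, t.isLt]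
      rw [e1, zero_mul, zero_mul]
    rw [Finset.sum_congr rfl fun t _ => head t]
    simp [diagEmb, hi]

lemma perm_orth {p : ℕ} (S : Matrix (Fin p) (Fin p) ℝ) (σ : Equiv.Perm (Fin p))
    (hS : Sᵀ * S = 1) : (S.submatrix id σ)ᵀ * (S.submatrix id σ) = 1 := by
  ext i j
  rw [mul_apply, Matrix.one_apply]
  have : ∀ k, (S.submatrix id σ)ᵀ i k * S.submatrix id σ k j = S k (σ i) * S k (σ j) := by
    intro k; rw [transpose_apply, submatrix_apply, submatrix_apply, id]
  rw [Finset.sum_congr rfl fun k _ => this k]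
  have h2 := congrFun (congrFun hS (σ i)) (σ j)
  rw [mul_apply, Matrix.one_apply] at h2
  rw [Finset.sum_congr rfl fun k _ => by rw [transpose_apply]] at h2
  rw [h2]
  by_cases h : i = j
  · rw [if_pos h, if_pos (by rw [h])]
  · rw [if_neg h, if_neg (fun e => h (σ.injective e))]

lemma conj_diag_apply {p : ℕ} (T : Matrix (Fin p) (Fin p) ℝ) (d : Fin p → ℝ) (i j : Fin p) :
    (T * diagonal d * Tᵀ) i j = ∑ k, T i k * d k * T j k := by
  rw [mul_apply]
  exact Finset.sum_congr rfl fun k _ => by rw [mul_diagonal, transpose_apply]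

lemma perm_conj {p : ℕ} (S : Matrix (Fin p) (Fin p) ℝ) (σ : Equiv.Perm (Fin p))
    (μ : Fin p → ℝ) :
    (S.submatrix id σ) * diagonal (μ ∘ σ) * (S.submatrix id σ)ᵀ = S * diagonal μ * Sᵀ := by
  ext i j
  rw [conj_diag_apply, conj_diag_apply]
  simp only [submatrix_apply, id, Function.comp_apply]
  exact Equiv.sum_comp σ (fun k => S i k * μ k * S j k)

lemma trace_conj {p : ℕ} (S : Matrix (Fin p) (Fin p) ℝ) (d : Fin p → ℝ)
    (hS : Sᵀ * S = 1) : (S * diagonal d * Sᵀ).trace = ∑ i, d i := by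
  rw [Matrix.trace_mul_cycle, hS, one_mul, Matrix.trace_diagonal]

lemma eig_diag_entry {p : ℕ} (S : Matrix (Fin p) (Fin p) ℝ) (μ : Fin p → ℝ)
    (A : Matrix (Fin p) (Fin p) ℝ) (hS : Sᵀ * S = 1) (hA : A = S * diagonal μ * Sᵀ)
    (t : Fin p) :
    μ t = ∑ i, ∑ j, S i t * A i j * S j t := by
  have key : Sᵀ * A * S = diagonal μ := by
    rw [hA]
    calc Sᵀ * (S * diagonal μ * Sᵀ) * S
        = (Sᵀ * S) * diagonal μ * (Sᵀ * S) := by noncomm_ring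
      _ = diagonal μ := by rw [hS, one_mul, mul_one]
  have h1 : (Sᵀ * A * S) t t = μ t := by rw [key, diagonal_apply_eq]
  rw [← h1, mul_apply]
  have e : ∀ j, (Sᵀ * A) t j * S j t = ∑ i, S i t * A i j * S j t := by
    intro j
    rw [mul_apply, Finset.sum_mul]
    exact Finset.sum_congr rfl fun i _ => by rw [transpose_apply]
  rw [Finset.sum_congr rfl fun j _ => e j, Finset.sum_comm]

lemma col_unit {p : ℕ} (S : Matrix (Fin p) (Fin p) ℝ) (hS : Sᵀ * S = 1) (t : Fin p) :
    ∑ i, S i t * S i t = 1 := by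
  have h := congrFun (congrFun hS t) t
  rw [mul_apply, Matrix.one_apply_eq] at h
  rw [← h]
  exact Finset.sum_congr rfl fun k _ => by rw [transpose_apply]

lemma quad_conj {p : ℕ} (R : Matrix (Fin p) (Fin p) ℝ) (a : Fin p → ℝ) (x : Fin p → ℝ) :
    ∑ i, ∑ j, x i * ((R * diagonal a * Rᵀ) i j) * x j
      = ∑ k, a k * ((∑ i, x i * R i k) * (∑ i, x i * R i k)) := by
  calc ∑ i, ∑ j, x i * ((R * diagonal a * Rᵀ) i j) * x j
      = ∑ i, ∑ j, ∑ k, x i * (R i k * a k * R j k) * x j := by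
        refine Finset.sum_congr rfl fun i _ => Finset.sum_congr rfl fun j _ => ?_
        rw [conj_diag_apply, Finset.mul_sum, Finset.sum_mul]
    _ = ∑ k, ∑ i, ∑ j, x i * (R i k * a k * R j k) * x j := by
        rw [Finset.sum_congr rfl fun i (_ : i ∈ Finset.univ) => Finset.sum_comm]
        exact Finset.sum_comm
    _ = ∑ k, a k * ((∑ i, x i * R i k) * (∑ i, x i * R i k)) := by
        refine Finset.sum_congr rfl fun k _ => ?_
        rw [Finset.sum_mul_sum, Finset.mul_sum]
        refine Finset.sum_congr rfl fun i _ => ?_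
        rw [Finset.mul_sum]
        exact Finset.sum_congr rfl fun j _ => by ring

lemma quad_diag {p : ℕ} (b : Fin p → ℝ) (x : Fin p → ℝ) :
    ∑ i, ∑ j, x i * (diagonal b i j) * x j = ∑ i, b i * (x i * x i) := by
  refine Finset.sum_congr rfl fun i _ => ?_
  rw [Finset.sum_eq_single i]
  · rw [diagonal_apply_eq]; ring
  · intro j _ hji
    rw [diagonal_apply_ne' _ hji, mul_zero, zero_mul]
  · intro h; exact absurd (Finset.mem_univ i) h

lemma quad_expand {p : ℕ} (R : Matrix (Fin p) (Fin p) ℝ) (a b : Fin p → ℝ)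
    (c1 c2 : ℝ) (x : Fin p → ℝ) :
    ∑ i, ∑ j, x i * ((c1 • (R * diagonal a * Rᵀ) + c2 • diagonal b) i j) * x j
      = c1 * (∑ k, a k * ((∑ i, x i * R i k) * (∑ i, x i * R i k)))
        + c2 * (∑ i, b i * (x i * x i)) := by
  have split : ∀ i j, x i * ((c1 • (R * diagonal a * Rᵀ) + c2 • diagonal b) i j) * x j
      = c1 * (x i * ((R * diagonal a * Rᵀ) i j) * x j)
        + c2 * (x i * (diagonal b i j) * x j) := by
    intro i j
    rw [Matrix.add_apply, Matrix.smul_apply, Matrix.smul_apply, smul_eq_mul, smul_eq_mul]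
    ring
  rw [Finset.sum_congr rfl fun i (_ : i ∈ Finset.univ) =>
    Finset.sum_congr rfl fun j (_ : j ∈ Finset.univ) => split i j]
  rw [Finset.sum_congr rfl fun i (_ : i ∈ Finset.univ) => Finset.sum_add_distrib,
    Finset.sum_add_distrib, ← quad_conj R a x, ← quad_diag b x]
  congr 1
  · rw [Finset.mul_sum]
    exact Finset.sum_congr rfl fun i _ => (Finset.mul_sum _ _ _).symm
  · rw [Finset.mul_sum]
    exact Finset.sum_congr rfl fun i _ => (Finset.mul_sum _ _ _).symm

lemma sum_colsq {p : ℕ} (R : Matrix (Fin p) (Fin p) ℝ) (hRR : R * Rᵀ = 1) (x : Fin p → ℝ) :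
    ∑ k, (∑ i, x i * R i k) * (∑ i, x i * R i k) = ∑ i, x i * x i := by
  calc ∑ k, (∑ i, x i * R i k) * (∑ i, x i * R i k)
      = ∑ k, ∑ i, ∑ j, (x i * R i k) * (x j * R j k) := by
        exact Finset.sum_congr rfl fun k _ => Finset.sum_mul_sum _ _ _ _
    _ = ∑ i, ∑ j, ∑ k, (x i * R i k) * (x j * R j k) := by
        rw [Finset.sum_comm]
        exact Finset.sum_congr rfl fun i _ => Finset.sum_comm
    _ = ∑ i, ∑ j, (x i * x j) * ((R * Rᵀ) i j) := by
        refine Finset.sum_congr rfl fun i _ => Finset.sum_congr rfl fun j _ => ?_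
        rw [mul_apply, Finset.mul_sum]
        exact Finset.sum_congr rfl fun k _ => by rw [transpose_apply]; ring
    _ = ∑ i, x i * x i := by
        rw [hRR]
        refine Finset.sum_congr rfl fun i _ => ?_
        rw [Finset.sum_eq_single i]
        · rw [Matrix.one_apply_eq]; ring
        · intro j _ hji
          rw [Matrix.one_apply_ne' hji, mul_zero]
        · intro h; exact absurd (Finset.mem_univ i) h

lemma sum_weighted_lower {p : ℕ} (a z : Fin p → ℝ) (la : ℝ)
    (ha : ∀ k, la ≤ a k) (hz : ∀ k, 0 ≤ z k) (hz1 : ∑ k, z k = 1) :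
    la ≤ ∑ k, a k * z k := by
  calc la = ∑ k, la * z k := by rw [← Finset.mul_sum, hz1, mul_one]
    _ ≤ ∑ k, a k * z k :=
      Finset.sum_le_sum fun k _ => mul_le_mul_of_nonneg_right (ha k) (hz k)

lemma sum_weighted_upper {p : ℕ} (a z : Fin p → ℝ) (ua : ℝ)
    (ha : ∀ k, a k ≤ ua) (hz : ∀ k, 0 ≤ z k) (hz1 : ∑ k, z k = 1) :
    ∑ k, a k * z k ≤ ua := by
  calc ∑ k, a k * z k ≤ ∑ k, ua * z k :=
      Finset.sum_le_sum fun k _ => mul_le_mul_of_nonneg_right (ha k) (hz k)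
    _ = ua := by rw [← Finset.mul_sum, hz1, mul_one]

lemma real_spectral {p : ℕ} (A : Matrix (Fin p) (Fin p) ℝ) (hA : Aᵀ = A) :
    ∃ (S : Matrix (Fin p) (Fin p) ℝ) (μ : Fin p → ℝ), Sᵀ * S = 1 ∧ A = S * diagonal μ * Sᵀ := by
  have hH : A.IsHermitian := by
    rw [Matrix.IsHermitian, Matrix.conjTranspose_eq_transpose_of_trivial]; exact hA
  refine ⟨(hH.eigenvectorUnitary : Matrix (Fin p) (Fin p) ℝ), hH.eigenvalues, ?_, ?_⟩
  · have h := Matrix.mem_unitaryGroup_iff'.mp (hH.eigenvectorUnitary).2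
    rwa [Matrix.star_eq_conjTranspose, Matrix.conjTranspose_eq_transpose_of_trivial] at h
  · have h := hH.spectral_theorem
    rwa [Unitary.conjStarAlgAut_apply, Matrix.star_eq_conjTranspose, Matrix.conjTranspose_eq_transpose_of_trivial,
      show (RCLike.ofReal ∘ hH.eigenvalues : Fin p → ℝ) = hH.eigenvalues by ext; simp] at h

lemma antitone_eq_of_multiset {p : ℕ} (f g : Fin p → ℝ)
    (hf : ∀ i j : Fin p, i ≤ j → f j ≤ f i) (hg : ∀ i j : Fin p, i ≤ j → g j ≤ g i)
    (h : Multiset.map f Finset.univ.val = Multiset.map g Finset.univ.val) : f = g := by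
  rw [Fin.univ_val_map, Fin.univ_val_map] at h
  have hperm : (List.ofFn f).Perm (List.ofFn g) := Multiset.coe_eq_coe.mp h
  haveI : IsAntisymm ℝ (· ≥ ·) := ⟨fun a b h1 h2 => le_antisymm h2 h1⟩
  have hsf : (List.ofFn f).Pairwise (· ≥ ·) :=
    List.pairwise_ofFn.mpr fun i j hij => hf i j hij.le
  have hsg : (List.ofFn g).Pairwise (· ≥ ·) :=
    List.pairwise_ofFn.mpr fun i j hij => hg i j hij.le
  exact List.ofFn_injective (List.Perm.eq_of_pairwise' hsf hsg hperm)

lemma eig_unique {p : ℕ} (A W W' : Matrix (Fin p) (Fin p) ℝ) (ψ ψ' : Fin p → ℝ)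
    (hW : Wᵀ * W = 1) (hW' : W'ᵀ * W' = 1)
    (h1 : A = W * diagonal ψ * Wᵀ) (h2 : A = W' * diagonal ψ' * W'ᵀ)
    (hm : ∀ i j : Fin p, i ≤ j → ψ j ≤ ψ i) (hm' : ∀ i j : Fin p, i ≤ j → ψ' j ≤ ψ' i) :
    ψ = ψ' := by
  have det_eq : ∀ (V : Matrix (Fin p) (Fin p) ℝ) (φ : Fin p → ℝ), Vᵀ * V = 1 →
      A = V * diagonal φ * Vᵀ → ∀ x : ℝ, (x • (1 : Matrix (Fin p) (Fin p) ℝ) - A).det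
        = ∏ i, (x - φ i) := by
    intro V φ hV hA x
    have hVV : V * Vᵀ = 1 := mul_eq_one_comm.mp hV
    have key : x • (1 : Matrix (Fin p) (Fin p) ℝ) - A
        = V * (diagonal fun i => x - φ i) * Vᵀ := by
      have e1 : (diagonal fun i => x - φ i)
          = x • (1 : Matrix (Fin p) (Fin p) ℝ) - diagonal φ := by
        ext i j
        by_cases h : i = j
        · subst h; simp [Matrix.one_apply_eq]
        · simp [diagonal_apply_ne _ h, Matrix.one_apply_ne h]
      rw [e1, Matrix.mul_sub, Matrix.sub_mul, hA]
      congr 1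
      rw [Matrix.mul_smul, Matrix.smul_mul, mul_one, hVV]
    rw [key, Matrix.det_mul, Matrix.det_mul, mul_comm, ← mul_assoc, ← Matrix.det_mul, hV,
      Matrix.det_one, one_mul, Matrix.det_diagonal]
  have poly_eq : (∏ i, (Polynomial.X - Polynomial.C (ψ i)))
      = ∏ i, (Polynomial.X - Polynomial.C (ψ' i)) := by
    apply Polynomial.funext
    intro x
    rw [Polynomial.eval_prod, Polynomial.eval_prod]
    simp only [Polynomial.eval_sub, Polynomial.eval_X, Polynomial.eval_C]
    rw [← det_eq W ψ hW h1 x, ← det_eq W' ψ' hW' h2 x]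
  have roots_eq : Multiset.map ψ Finset.univ.val = Multiset.map ψ' Finset.univ.val := by
    have r : ∀ φ : Fin p → ℝ, (∏ i, (Polynomial.X - Polynomial.C (φ i))).roots
        = Multiset.map φ Finset.univ.val := by
      intro φ
      rw [Finset.prod_eq_multiset_prod, ← Polynomial.roots_multiset_prod_X_sub_C
        (Multiset.map φ Finset.univ.val), Multiset.map_map]
      rfl
    rw [← r ψ, ← r ψ', poly_eq]
  exact antitone_eq_of_multiset ψ ψ' hm hm' roots_eq

theorem sum_topK_eigenvalues_pooled
    {D Q K ny nz : ℕ}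
    (hQ : 1 ≤ Q) (hQD : Q < D) (hK : 1 ≤ K) (hKD : K ≤ D - Q - 1)
    (hny : 2 ≤ ny) (hnz : 2 ≤ nz)
    (ΩY U : Matrix (Fin (D - Q - 1)) (Fin (D - Q - 1)) ℝ)
    (ΩZ V : Matrix (Fin (D - 1)) (Fin (D - 1)) ℝ)
    (α : Fin (D - Q - 1) → ℝ) (β : Fin (D - 1) → ℝ)
    (R1 : Matrix (Fin K) (Fin K) ℝ)
    (R2 : Matrix (Fin (D - 1 - K)) (Fin (D - 1 - K)) ℝ)
    (hU : Uᵀ * U = 1) (hV : Vᵀ * V = 1)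
    (hR1 : R1ᵀ * R1 = 1) (hR2 : R2ᵀ * R2 = 1)
    (hΩY : ΩY = U * Matrix.diagonal α * Uᵀ)
    (hΩZ : ΩZ = V * Matrix.diagonal β * Vᵀ)
    (hα : ∀ i j : Fin (D - Q - 1), i < j → α j < α i) (hα0 : ∀ i, 0 ≤ α i)
    (hβ : ∀ i j : Fin (D - 1), i < j → β j < β i) (hβ0 : ∀ i, 0 ≤ β i)
    -- common subspace: the embedded eigenvectors of Ω_Y are obtained from
    -- those of Ω_Z by rotating within the first K and the last D-1-K columns
    (hcommon : embMat D Q U = V * blockRot D K R1 R2) :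
    ∀ (W : Matrix (Fin (D - 1)) (Fin (D - 1)) ℝ) (ψ : Fin (D - 1) → ℝ),
      Wᵀ * W = 1 →
      (∀ i j : Fin (D - 1), i ≤ j → ψ j ≤ ψ i) →
      ((ny : ℝ) + (nz : ℝ) - 2)⁻¹ •
          (((ny : ℝ) - 1) • diagEmb D Q ΩY + ((nz : ℝ) - 1) • ΩZ) =
        W * Matrix.diagonal ψ * Wᵀ →
      ∑ i ∈ Finset.univ.filter (fun i : Fin (D - 1) => i.val < K), ψ i =
        ((ny : ℝ) - 1) / ((ny : ℝ) + (nz : ℝ) - 2) *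
            ∑ i ∈ Finset.univ.filter (fun i : Fin (D - Q - 1) => i.val < K), α i +
          ((nz : ℝ) - 1) / ((ny : ℝ) + (nz : ℝ) - 2) *
            ∑ i ∈ Finset.univ.filter (fun i : Fin (D - 1) => i.val < K), β i := by
  intro W ψ hW hψ hpool
  have hm : D - Q - 1 ≤ D - 1 := by omega
  have hKn : K ≤ D - 1 := by omega
  have h2y : (2:ℝ) ≤ (ny:ℝ) := by exact_mod_cast hny
  have h2z : (2:ℝ) ≤ (nz:ℝ) := by exact_mod_cast hnz
  have hcpos : (0:ℝ) < (ny:ℝ) + (nz:ℝ) - 2 := by linarith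
  set c1 : ℝ := ((ny:ℝ) - 1) / ((ny:ℝ) + (nz:ℝ) - 2) with hc1def
  set c2 : ℝ := ((nz:ℝ) - 1) / ((ny:ℝ) + (nz:ℝ) - 2) with hc2def
  have hc1 : 0 ≤ c1 := div_nonneg (by linarith) (by linarith)
  have hc2 : 0 ≤ c2 := div_nonneg (by linarith) (by linarith)
  set A : Matrix (Fin (D-1)) (Fin (D-1)) ℝ := c1 • diagEmb D Q ΩY + c2 • ΩZ with hAdef
  have hpool' : A = W * Matrix.diagonal ψ * Wᵀ := by
    rw [← hpool, hAdef, smul_add, smul_smul, smul_smul, hc1def, hc2def,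
      div_eq_inv_mul, div_eq_inv_mul]
  set α' : Fin (D - 1) → ℝ := fun k => if h : k.1 < D - Q - 1 then α ⟨k.1, h⟩ else 0
    with hα'def
  set a1 : Fin K → ℝ := fun t => α' ⟨t.1, by have := t.isLt; omega⟩ with ha1def
  set a2 : Fin (D - 1 - K) → ℝ := fun t => α' ⟨K + t.1, by have := t.isLt; omega⟩ with ha2def
  set b1 : Fin K → ℝ := fun t => β ⟨t.1, by have := t.isLt; omega⟩ with hb1def
  set b2 : Fin (D - 1 - K) → ℝ := fun t => β ⟨K + t.1, by have := t.isLt; omega⟩ with hb2def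
  set M1 : Matrix (Fin K) (Fin K) ℝ := c1 • (R1 * diagonal a1 * R1ᵀ) + c2 • diagonal b1
    with hM1def
  set M2 : Matrix (Fin (D - 1 - K)) (Fin (D - 1 - K)) ℝ
    := c1 • (R2 * diagonal a2 * R2ᵀ) + c2 • diagonal b2 with hM2def
  have hdα : diagonal α' = blockRot D K (diagonal a1) (diagonal a2) :=
    blockRot_diagonal hKn α'
  have hdβ : diagonal β = blockRot D K (diagonal b1) (diagonal b2) :=
    blockRot_diagonal hKn β
  have hE : diagEmb D Q ΩY = embMat D Q U * diagonal α' * (embMat D Q U)ᵀ := by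
    rw [hΩY]; exact (diagEmb_spec hm U α).symm
  have hEmb2 : diagEmb D Q ΩY
      = V * (blockRot D K R1 R2 * diagonal α' * (blockRot D K R1 R2)ᵀ) * Vᵀ := by
    rw [hE, hcommon, Matrix.transpose_mul]
    noncomm_ring
  have inner : c1 • (blockRot D K R1 R2 * diagonal α' * (blockRot D K R1 R2)ᵀ)
      + c2 • diagonal β = blockRot D K M1 M2 := by
    rw [hdα, hdβ, blockRot_transpose, blockRot_mul hKn, blockRot_mul hKn,
      blockRot_smul, blockRot_smul, blockRot_add, hM1def, hM2def]
  have hAV : A = V * blockRot D K M1 M2 * Vᵀ := by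
    rw [← inner, hAdef, hEmb2, hΩZ]
    rw [Matrix.mul_add, Matrix.add_mul, Matrix.mul_smul, Matrix.smul_mul,
      Matrix.mul_smul, Matrix.smul_mul]
  have hsym1 : M1ᵀ = M1 := by
    rw [hM1def]
    simp [Matrix.transpose_add, Matrix.transpose_smul, Matrix.transpose_mul,
      Matrix.transpose_transpose, Matrix.diagonal_transpose, Matrix.mul_assoc]
  have hsym2 : M2ᵀ = M2 := by
    rw [hM2def]
    simp [Matrix.transpose_add, Matrix.transpose_smul, Matrix.transpose_mul,
      Matrix.transpose_transpose, Matrix.diagonal_transpose, Matrix.mul_assoc]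
  obtain ⟨S1, μ1, hS1, hMS1⟩ := real_spectral M1 hsym1
  obtain ⟨S2, μ2, hS2, hMS2⟩ := real_spectral M2 hsym2
  set σ1 : Equiv.Perm (Fin K) := Tuple.sort (fun t => -(μ1 t)) with hσ1def
  set σ2 : Equiv.Perm (Fin (D - 1 - K)) := Tuple.sort (fun t => -(μ2 t)) with hσ2def
  set μ1' : Fin K → ℝ := μ1 ∘ σ1 with hμ1'def
  set μ2' : Fin (D - 1 - K) → ℝ := μ2 ∘ σ2 with hμ2'def
  have hμ1'mono : ∀ i j : Fin K, i ≤ j → μ1' j ≤ μ1' i := by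
    intro i j hij
    have h := Tuple.monotone_sort (fun t => -(μ1 t)) hij
    simp only [Function.comp_apply] at h
    simp only [hμ1'def, Function.comp_apply, hσ1def]
    linarith
  have hμ2'mono : ∀ i j : Fin (D - 1 - K), i ≤ j → μ2' j ≤ μ2' i := by
    intro i j hij
    have h := Tuple.monotone_sort (fun t => -(μ2 t)) hij
    simp only [Function.comp_apply] at h
    simp only [hμ2'def, Function.comp_apply, hσ2def]
    linarith
  set S1' := S1.submatrix id σ1 with hS1'def
  set S2' := S2.submatrix id σ2 with hS2'def
  have hS1' : S1'ᵀ * S1' = 1 := perm_orth S1 σ1 hS1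
  have hS2' : S2'ᵀ * S2' = 1 := perm_orth S2 σ2 hS2
  have hMS1' : M1 = S1' * diagonal μ1' * S1'ᵀ := by
    rw [hS1'def, hμ1'def, perm_conj S1 σ1 μ1]; exact hMS1
  have hMS2' : M2 = S2' * diagonal μ2' * S2'ᵀ := by
    rw [hS2'def, hμ2'def, perm_conj S2 σ2 μ2]; exact hMS2
  -- eigenvalue bounds
  set la : ℝ := α ⟨K - 1, by omega⟩ with hladef
  set lb : ℝ := β ⟨K - 1, by omega⟩ with hlbdef
  have hαle : ∀ i j : Fin (D - Q - 1), i ≤ j → α j ≤ α i := fun i j hij =>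
    hij.lt_or_eq.elim (fun h => (hα i j h).le) (fun h => by rw [h])
  have hβle : ∀ i j : Fin (D - 1), i ≤ j → β j ≤ β i := fun i j hij =>
    hij.lt_or_eq.elim (fun h => (hβ i j h).le) (fun h => by rw [h])
  have ha1 : ∀ t : Fin K, la ≤ a1 t := by
    intro t
    have e : a1 t = α ⟨t.1, by have := t.isLt; omega⟩ := by
      simp only [ha1def, hα'def]
      rw [dif_pos (show (t:ℕ) < D - Q - 1 by omega)]
    rw [e, hladef]
    exact hαle _ _ (by simp only [Fin.mk_le_mk]; omega)
  have hb1 : ∀ t : Fin K, lb ≤ b1 t := by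
    intro t
    rw [hb1def, hlbdef]
    exact hβle _ _ (by simp only [Fin.mk_le_mk]; omega)
  have ha2 : ∀ t : Fin (D - 1 - K), a2 t ≤ la := by
    intro t
    simp only [ha2def, hα'def]
    by_cases h : K + (t:ℕ) < D - Q - 1
    · rw [dif_pos (show K + (t:ℕ) < D - Q - 1 from h), hladef]
      exact hαle _ _ (by simp only [Fin.mk_le_mk]; omega)
    · rw [dif_neg (show ¬ (K + (t:ℕ) < D - Q - 1) from h), hladef]
      exact hα0 _
  have hb2 : ∀ t : Fin (D - 1 - K), b2 t ≤ lb := by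
    intro t
    rw [hb2def, hlbdef]
    exact hβle _ _ (by simp only [Fin.mk_le_mk]; omega)
  have hbound1 : ∀ t : Fin K, c1 * la + c2 * lb ≤ μ1 t := by
    intro t
    have hxu : ∑ i, S1 i t * S1 i t = 1 := col_unit S1 hS1 t
    have hRR1 : R1 * R1ᵀ = 1 := mul_eq_one_comm.mp hR1
    have hy : ∑ k, (∑ i, S1 i t * R1 i k) * (∑ i, S1 i t * R1 i k) = 1 := by
      rw [sum_colsq R1 hRR1 (fun i => S1 i t)]; exact hxu
    have he := eig_diag_entry S1 μ1 M1 hS1 hMS1 t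
    rw [hM1def] at he
    rw [he, quad_expand]
    have l1 : la ≤ ∑ k, a1 k * ((∑ i, S1 i t * R1 i k) * (∑ i, S1 i t * R1 i k)) :=
      sum_weighted_lower _ _ la ha1 (fun k => mul_self_nonneg _) hy
    have l2 : lb ≤ ∑ i, b1 i * (S1 i t * S1 i t) :=
      sum_weighted_lower _ _ lb hb1 (fun k => mul_self_nonneg _) hxu
    exact add_le_add (mul_le_mul_of_nonneg_left l1 hc1) (mul_le_mul_of_nonneg_left l2 hc2)
  have hbound2 : ∀ t : Fin (D - 1 - K), μ2 t ≤ c1 * la + c2 * lb := by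
    intro t
    have hxu : ∑ i, S2 i t * S2 i t = 1 := col_unit S2 hS2 t
    have hRR2 : R2 * R2ᵀ = 1 := mul_eq_one_comm.mp hR2
    have hy : ∑ k, (∑ i, S2 i t * R2 i k) * (∑ i, S2 i t * R2 i k) = 1 := by
      rw [sum_colsq R2 hRR2 (fun i => S2 i t)]; exact hxu
    have he := eig_diag_entry S2 μ2 M2 hS2 hMS2 t
    rw [hM2def] at he
    rw [he, quad_expand]
    have l1 : ∑ k, a2 k * ((∑ i, S2 i t * R2 i k) * (∑ i, S2 i t * R2 i k)) ≤ la :=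
      sum_weighted_upper _ _ la ha2 (fun k => mul_self_nonneg _) hy
    have l2 : ∑ i, b2 i * (S2 i t * S2 i t) ≤ lb :=
      sum_weighted_upper _ _ lb hb2 (fun k => mul_self_nonneg _) hxu
    exact add_le_add (mul_le_mul_of_nonneg_left l1 hc1) (mul_le_mul_of_nonneg_left l2 hc2)
  -- build the explicit diagonalization
  set ψ0 : Fin (D - 1) → ℝ := fun i =>
    if h : i.1 < K then μ1' ⟨i.1, h⟩ else μ2' ⟨i.1 - K, by have := i.isLt; omega⟩
    with hψ0def
  have f1 : (fun t : Fin K => ψ0 ⟨t.1, by have := t.isLt; omega⟩) = μ1' := by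
    funext t
    simp only [hψ0def]
    rw [dif_pos (show (t:ℕ) < K from t.isLt)]
  have f2 : (fun t : Fin (D - 1 - K) => ψ0 ⟨K + t.1, by have := t.isLt; omega⟩) = μ2' := by
    funext t
    simp only [hψ0def]
    rw [dif_neg (show ¬ (K + (t:ℕ) < K) by omega)]
    congr 1
    exact Fin.ext (by simp)
  have hψ0d : diagonal ψ0 = blockRot D K (diagonal μ1') (diagonal μ2') := by
    rw [blockRot_diagonal hKn ψ0]
    exact congrArg₂ (fun X Y => blockRot D K (diagonal X) (diagonal Y)) f1 f2
  set W0 := V * blockRot D K S1' S2' with hW0def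
  have hW0 : W0ᵀ * W0 = 1 := by
    rw [hW0def, Matrix.transpose_mul, blockRot_transpose]
    calc blockRot D K S1'ᵀ S2'ᵀ * Vᵀ * (V * blockRot D K S1' S2')
        = blockRot D K S1'ᵀ S2'ᵀ * (Vᵀ * V) * blockRot D K S1' S2' := by noncomm_ring
      _ = blockRot D K S1'ᵀ S2'ᵀ * blockRot D K S1' S2' := by rw [hV, mul_one]
      _ = 1 := by rw [blockRot_mul hKn, hS1', hS2', blockRot_one]
  have hAW0 : A = W0 * diagonal ψ0 * W0ᵀ := by
    rw [hAV, hW0def, hψ0d, Matrix.transpose_mul, blockRot_transpose]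
    have hbm : blockRot D K M1 M2 = blockRot D K S1' S2'
        * blockRot D K (diagonal μ1') (diagonal μ2') * blockRot D K S1'ᵀ S2'ᵀ := by
      rw [blockRot_mul hKn, blockRot_mul hKn, ← hMS1', ← hMS2']
    rw [hbm]
    noncomm_ring
  have hψ0mono : ∀ i j : Fin (D - 1), i ≤ j → ψ0 j ≤ ψ0 i := by
    intro i j hij
    have hij' : i.1 ≤ j.1 := hij
    by_cases hi : i.1 < K <;> by_cases hj : j.1 < K
    · simp only [hψ0def]
      rw [dif_pos hi, dif_pos hj]
      exact hμ1'mono ⟨i.1, hi⟩ ⟨j.1, hj⟩ (by simp only [Fin.mk_le_mk]; exact hij')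
    · simp only [hψ0def]
      rw [dif_pos hi, dif_neg hj]
      calc μ2' _ ≤ c1 * la + c2 * lb := by rw [hμ2'def]; exact hbound2 _
        _ ≤ μ1' _ := by rw [hμ1'def]; exact hbound1 _
    · exact absurd hj (by omega)
    · simp only [hψ0def]
      rw [dif_neg hi, dif_neg hj]
      exact hμ2'mono _ _ (by simp only [Fin.mk_le_mk]; omega)
  have hψeq : ψ = ψ0 := eig_unique A W W0 ψ ψ0 hW hW0 hpool' hAW0 hψ hψ0mono
  -- final computation
  rw [filter_sum hKn ψ, filter_sum hKD α, filter_sum hKn β, hψeq]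
  have e0 : ∀ t : Fin K, ψ0 ⟨t.1, by have := t.isLt; omega⟩ = μ1' t := by
    intro t
    simp only [hψ0def]
    rw [dif_pos (show (t:ℕ) < K from t.isLt)]
  rw [Finset.sum_congr rfl fun t _ => e0 t]
  have eμ : ∑ t : Fin K, μ1' t = ∑ t : Fin K, μ1 t := by
    rw [hμ1'def]
    exact Equiv.sum_comp σ1 μ1
  have etr : ∑ t : Fin K, μ1 t = c1 * (∑ t, a1 t) + c2 * (∑ t, b1 t) := by
    have h1 : M1.trace = ∑ t, μ1 t := by rw [hMS1]; exact trace_conj S1 μ1 hS1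
    have h2 : M1.trace = c1 * (∑ t, a1 t) + c2 * (∑ t, b1 t) := by
      rw [hM1def, Matrix.trace_add, Matrix.trace_smul, Matrix.trace_smul,
        trace_conj R1 a1 hR1, Matrix.trace_diagonal]
      simp [smul_eq_mul]
    rw [← h1, h2]
  rw [eμ, etr]
  have ea1 : ∀ t : Fin K, a1 t = α ⟨t.1, by have := t.isLt; omega⟩ := by
    intro t
    simp only [ha1def, hα'def]
    rw [dif_pos (show (t:ℕ) < D - Q - 1 by omega)]
  rw [Finset.sum_congr rfl fun t _ => ea1 t]
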